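/- For the mixture GW(p) = p|GHZ⟩⟨GHZ| + (1−p)|W⟩⟨W| with p ∈ [0,1], GW(p) fails to be a virtual quantum Markov chain exactly when p = 1 or p = 7 − 3√5; for all other p ∈ [0,1) the four blocks Q_B^{(ij)} are linearly independent and GW(p) is a virtual quantum Markov chain. -/
import Mathlib


open Matrix BigOperators
open scoped ComplexOrder

/-- The block `Q_BC^(ij) = ⟨i|_A ρ_ABC |j⟩_A` of a tripartite operator. -/
noncomputable def QBC {dA dB dC : ℕ}
    (ρ : Matrix (Fin dA × Fin dB × Fin dC) (Fin dA × Fin dB × Fin dC) ℂ)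
    (i j : Fin dA) : Matrix (Fin dB × Fin dC) (Fin dB × Fin dC) ℂ :=
  Matrix.of fun bc bc' => ρ (i, bc.1, bc.2) (j, bc'.1, bc'.2)

/-- The block `Q_B^(ij) = ⟨i|_A (tr_C ρ_ABC) |j⟩_A`. -/
noncomputable def QB {dA dB dC : ℕ}
    (ρ : Matrix (Fin dA × Fin dB × Fin dC) (Fin dA × Fin dB × Fin dC) ℂ)
    (i j : Fin dA) : Matrix (Fin dB) (Fin dB) ℂ :=
  Matrix.of fun b b' => ∑ c : Fin dC, ρ (i, b, c) (j, b', c)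

/-- A linear, Hermitian-preserving and trace-preserving map from system `B` to `B ⊗ C`. -/
def IsHPTP {dB dC : ℕ}
    (R : Matrix (Fin dB) (Fin dB) ℂ → Matrix (Fin dB × Fin dC) (Fin dB × Fin dC) ℂ) : Prop :=
  IsLinearMap ℂ R ∧ (∀ M, R Mᴴ = (R M)ᴴ) ∧ (∀ M, (R M).trace = M.trace)

/-- The virtual quantum Markov chain criterion `ker [Q_B] ⊆ ker [Q_BC]`. -/
def IsVQMC {dA dB dC : ℕ}
    (ρ : Matrix (Fin dA × Fin dB × Fin dC) (Fin dA × Fin dB × Fin dC) ℂ) : Prop :=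
  ∀ c : Fin dA → Fin dA → ℂ,
    (∑ i, ∑ j, c i j • QB ρ i j) = 0 → (∑ i, ∑ j, c i j • QBC ρ i j) = 0

/-- Outer product `|v⟩⟨v|` of a three-qubit vector. -/
noncomputable def outer (v : Fin 2 × Fin 2 × Fin 2 → ℂ) :
    Matrix (Fin 2 × Fin 2 × Fin 2) (Fin 2 × Fin 2 × Fin 2) ℂ :=
  Matrix.of fun x y => v x * star (v y)

/-- The three-qubit GHZ state `(|000⟩ + |111⟩)/√2`. -/
noncomputable def ghz : Fin 2 × Fin 2 × Fin 2 → ℂ :=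
  fun x => if x = (0,0,0) ∨ x = (1,1,1) then (1 / Real.sqrt 2 : ℝ) else 0

/-- The three-qubit W state `(|001⟩+|010⟩+|100⟩)/√3`. -/
noncomputable def wState : Fin 2 × Fin 2 × Fin 2 → ℂ :=
  fun x => if x = (0,0,1) ∨ x = (0,1,0) ∨ x = (1,0,0) then (1 / Real.sqrt 3 : ℝ) else 0

/-- `GW(p) = p|GHZ⟩⟨GHZ| + (1-p)|W⟩⟨W|`. -/
noncomputable def ghzW (p : ℝ) : Matrix (Fin 2 × Fin 2 × Fin 2) (Fin 2 × Fin 2 × Fin 2) ℂ :=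
  ((p : ℝ) : ℂ) • outer ghz + ((1 - p : ℝ) : ℂ) • outer wState


lemma inv2c : ((Real.sqrt 2 : ℝ) : ℂ)⁻¹ * ((Real.sqrt 2 : ℝ) : ℂ)⁻¹ = 1/2 := by
  rw [← mul_inv, ← Complex.ofReal_mul, Real.mul_self_sqrt (by norm_num)]
  norm_num

lemma inv3c : ((Real.sqrt 3 : ℝ) : ℂ)⁻¹ * ((Real.sqrt 3 : ℝ) : ℂ)⁻¹ = 1/3 := by
  rw [← mul_inv, ← Complex.ofReal_mul, Real.mul_self_sqrt (by norm_num)]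
  norm_num

lemma QB00 (p : ℝ) : QB (ghzW p) 0 0 =
    !![((p/2 + (1-p)/3 : ℝ):ℂ), 0; 0, (((1-p)/3 : ℝ):ℂ)] := by
  ext b b'
  fin_cases b <;> fin_cases b' <;>
    simp [QB, ghzW, outer, ghz, wState, Fin.sum_univ_two, Prod.ext_iff, inv2c, inv3c] <;>
    (push_cast; ring)

lemma QB01 (p : ℝ) : QB (ghzW p) 0 1 =
    !![0, 0; (((1-p)/3 : ℝ):ℂ), 0] := by
  ext b b'
  fin_cases b <;> fin_cases b' <;>
    simp [QB, ghzW, outer, ghz, wState, Fin.sum_univ_two, Prod.ext_iff, inv2c, inv3c] <;>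
    (push_cast; ring)

lemma QB10 (p : ℝ) : QB (ghzW p) 1 0 =
    !![0, (((1-p)/3 : ℝ):ℂ); 0, 0] := by
  ext b b'
  fin_cases b <;> fin_cases b' <;>
    simp [QB, ghzW, outer, ghz, wState, Fin.sum_univ_two, Prod.ext_iff, inv2c, inv3c] <;>
    (push_cast; ring)

lemma QB11 (p : ℝ) : QB (ghzW p) 1 1 =
    !![(((1-p)/3 : ℝ):ℂ), 0; 0, ((p/2 : ℝ):ℂ)] := by
  ext b b'
  fin_cases b <;> fin_cases b' <;>
    simp [QB, ghzW, outer, ghz, wState, Fin.sum_univ_two, Prod.ext_iff, inv2c, inv3c] <;>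
    (push_cast; ring)

lemma sqrt5_sq : Real.sqrt 5 * Real.sqrt 5 = 5 := Real.mul_self_sqrt (by norm_num)

lemma det_ne (p : ℝ) (hp1 : p ≤ 1) (h1 : p ≠ 7 - 3 * Real.sqrt 5) :
    ((p/2 + (1-p)/3) * (p/2) - ((1-p)/3) * ((1-p)/3) : ℝ) ≠ 0 := by
  have hs : Real.sqrt 5 ≥ 2 := by nlinarith [sqrt5_sq, Real.sqrt_nonneg 5]
  have f1 : p - (7 - 3 * Real.sqrt 5) ≠ 0 := sub_ne_zero.2 h1
  have f2 : p - (7 + 3 * Real.sqrt 5) ≠ 0 := by nlinarith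
  have expand : (p - (7 - 3 * Real.sqrt 5)) * (p - (7 + 3 * Real.sqrt 5))
      = p^2 - 14*p + 49 - 9 * (Real.sqrt 5 * Real.sqrt 5) := by ring
  have hprod := mul_ne_zero f1 f2
  rw [expand, sqrt5_sq] at hprod
  intro h
  apply hprod
  nlinarith [h]

lemma key (p : ℝ) (hp1 : p ≤ 1) (h1 : p ≠ 1) (h2 : p ≠ 7 - 3 * Real.sqrt 5)
    (c : Fin 2 → Fin 2 → ℂ) (hc : (∑ i, ∑ j, c i j • QB (ghzW p) i j) = 0) :
    ∀ i j, c i j = 0 := by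
  have hq' : (1 : ℂ) - (p : ℂ) ≠ 0 := by
    intro h
    apply h1
    have : (p : ℂ) = 1 := by linear_combination -h
    exact_mod_cast this
  simp only [Fin.sum_univ_two, QB00, QB01, QB10, QB11] at hc
  have hE := fun b b' => Matrix.ext_iff.2 hc b b'
  have e00 := hE 0 0
  have e01 := hE 0 1
  have e10 := hE 1 0
  have e11 := hE 1 1
  simp [Matrix.add_apply, Matrix.smul_apply, smul_eq_mul] at e00 e01 e10 e11
  have hc01 : c 0 1 = 0 := by
    rcases e10 with h | h
    · exact h
    · exact absurd h hq'
  have hc10 : c 1 0 = 0 := by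
    rcases e01 with h | h
    · exact h
    · exact absurd h hq'
  have hD := det_ne p hp1 h2
  have hDc : (((p/2 + (1-p)/3) * (p/2) - ((1-p)/3) * ((1-p)/3) : ℝ) : ℂ) ≠ 0 := by
    exact_mod_cast hD
  have hc00 : c 0 0 = 0 := by
    have hz : c 0 0 * (((p/2 + (1-p)/3) * (p/2) - ((1-p)/3) * ((1-p)/3) : ℝ) : ℂ) = 0 := by
      push_cast
      linear_combination ((p:ℂ)/2) * e00 - ((1-(p:ℂ))/3) * e11
    rcases mul_eq_zero.1 hz with h | h
    · exact h
    · exact absurd h hDc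
  have hc11 : c 1 1 = 0 := by
    rw [hc00] at e00
    simp at e00
    rcases e00 with h | h
    · exact h
    · exact absurd h hq'
  intro i j
  fin_cases i <;> fin_cases j <;> assumption

/-- for `p ∈ [0,1]`, `GW(p)` fails to be a virtual quantum Markov chain
exactly when `p = 1` or `p = 7 - 3√5`; for all other `p` the four blocks `Q_B^(ij)` are
linearly independent (and `GW(p)` is a VQMC). -/
theorem ghz_mixed_with_W (p : ℝ) (hp : p ∈ Set.Icc (0 : ℝ) 1) :
    (¬ IsVQMC (ghzW p) ↔ p = 1 ∨ p = 7 - 3 * Real.sqrt 5) ∧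
    (p ≠ 1 → p ≠ 7 - 3 * Real.sqrt 5 →
      LinearIndependent ℂ (fun q : Fin 2 × Fin 2 => QB (ghzW p) q.1 q.2) ∧
      IsVQMC (ghzW p)) := by
  obtain ⟨hp0, hp1⟩ := hp
  have h52 : Real.sqrt 5 > 2 := by nlinarith [sqrt5_sq, Real.sqrt_nonneg 5]
  have good : ∀ (_ : p ≠ 1) (_ : p ≠ 7 - 3 * Real.sqrt 5),
      LinearIndependent ℂ (fun q : Fin 2 × Fin 2 => QB (ghzW p) q.1 q.2) ∧
      IsVQMC (ghzW p) := by
    intro h1 h2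
    constructor
    · rw [Fintype.linearIndependent_iff]
      intro g hg
      rw [Fintype.sum_prod_type] at hg
      have := key p hp1 h1 h2 (fun i j => g (i, j)) hg
      rintro ⟨i, j⟩
      exact this i j
    · intro c hc
      have hz := key p hp1 h1 h2 c hc
      simp [hz]
  refine ⟨⟨fun hnV => ?_, ?_⟩, good⟩
  · by_contra hnot
    push_neg at hnot
    exact hnV (good hnot.1 hnot.2).2
  · rintro (rfl | hp7) hV
    · -- p = 1
      set c : Fin 2 → Fin 2 → ℂ := fun i j => if i = 0 ∧ j = 1 then 1 else 0 with hcdef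
      have hsum : (∑ i, ∑ j, c i j • QB (ghzW 1) i j) = 0 := by
        simp only [Fin.sum_univ_two, hcdef]
        norm_num
        rw [QB01]
        ext i j
        fin_cases i <;> fin_cases j <;> norm_num
      have hE := Matrix.ext_iff.2 (hV c hsum) (0, 0) (1, 1)
      simp [hcdef, Fin.sum_univ_two, QBC, ghzW, outer, ghz, wState, Prod.ext_iff,
        inv2c, inv3c, Matrix.sum_apply] at hE
    · -- p = 7 - 3√5
      have hq0 : ((1 - p)/3 : ℝ) ≠ 0 := by rw [hp7]; intro h; nlinarith
      have hroot : ((p/2 + (1 - p)/3) * (p/2) : ℝ) = ((1 - p)/3) * ((1 - p)/3) := by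
        rw [hp7]; linear_combination (-(1:ℝ)/4) * sqrt5_sq
      have hrootC : (((p:ℝ)/2 + (1 - p)/3 : ℝ) : ℂ) * (((p:ℝ)/2 : ℝ) : ℂ)
          = (((1 - p)/3 : ℝ) : ℂ) * (((1 - p)/3 : ℝ) : ℂ) := by exact_mod_cast hroot
      set c : Fin 2 → Fin 2 → ℂ := fun i j =>
        if i = 0 ∧ j = 0 then -(((1 - p)/3 : ℝ) : ℂ)
        else if i = 1 ∧ j = 1 then ((p/2 + (1 - p)/3 : ℝ) : ℂ) else 0 with hcdef
      have hsum : (∑ i, ∑ j, c i j • QB (ghzW p) i j) = 0 := by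
        simp only [Fin.sum_univ_two, hcdef, QB00, QB01, QB10, QB11]
        norm_num
        ext i j
        fin_cases i <;> fin_cases j <;>
          simp [Matrix.add_apply, Matrix.smul_apply, smul_eq_mul] <;>
          (push_cast at hrootC ⊢;
           first
             | linear_combination (0:ℂ) * hrootC
             | linear_combination hrootC)
      have hE := Matrix.ext_iff.2 (hV c hsum) (0, 0) (0, 0)
      simp [hcdef, Fin.sum_univ_two, QBC, ghzW, outer, ghz, wState, Prod.ext_iff,
        inv2c, inv3c, Matrix.sum_apply] at hE
      have hqq : (((1 - p)/3 : ℝ) : ℂ) * (((1 - p)/3 : ℝ) : ℂ) = 0 := by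
        push_cast at hE ⊢
        linear_combination hE
      rcases mul_eq_zero.1 hqq with h | h <;>
        exact hq0 (by exact_mod_cast h)
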